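/- arXiv:2001.10769 — 2 statements merged into one kernel-verified Lean document; each statement's English description precedes it below -/
import Mathlib

section
/- Let E₁,…,E₁₀ be an isotropic 10-sequence in the Enriques lattice Λ. Then for every L ∈ Λ, the integer ⟨E₁,L⟩ + ⟨E₂,L⟩ + ⋯ + ⟨E₁₀,L⟩ is divisible by 3. (This is the lattice core of Theorem 1.4(b): the sum of the entries of the φ-vector of a polarization on an Enriques surface is divisible by 3.) -/
/-- Gram matrix of the Enriques lattice `U ⊕ E₈(-1)`: the orthogonal direct sum of the
hyperbolic plane and the negative of the E₈ Cartan matrix. -/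
def enriquesGram : Matrix (Fin 10) (Fin 10) ℤ :=
  !![0, 1, 0, 0, 0, 0, 0, 0, 0, 0;
     1, 0, 0, 0, 0, 0, 0, 0, 0, 0;
     0, 0, -2, 0, 1, 0, 0, 0, 0, 0;
     0, 0, 0, -2, 0, 1, 0, 0, 0, 0;
     0, 0, 1, 0, -2, 1, 0, 0, 0, 0;
     0, 0, 0, 1, 1, -2, 1, 0, 0, 0;
     0, 0, 0, 0, 0, 1, -2, 1, 0, 0;
     0, 0, 0, 0, 0, 0, 1, -2, 1, 0;
     0, 0, 0, 0, 0, 0, 0, 1, -2, 1;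
     0, 0, 0, 0, 0, 0, 0, 0, 1, -2]

/-- The symmetric bilinear pairing of the Enriques lattice `Λ = ℤ¹⁰`. -/
def epair (x y : Fin 10 → ℤ) : ℤ := ∑ i, ∑ j, x i * enriquesGram i j * y j

/-- An isotropic 10-sequence in the Enriques lattice: `⟨Eᵢ,Eᵢ⟩ = 0` and `⟨Eᵢ,Eⱼ⟩ = 1`
for `i ≠ j`. -/
def IsIsotropicTenSeq (E : Fin 10 → Fin 10 → ℤ) : Prop :=
  (∀ i, epair (E i) (E i) = 0) ∧ ∀ i j, i ≠ j → epair (E i) (E j) = 1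


/-! Reduce mod 3 and let `A` be the matrix with rows `Eᵢ`. Its Gram matrix `A G Aᵀ` is `J - I`,
which over `𝔽₃` kills the all-ones vector and has kernel spanned by it. Since `G` is unimodular,
`det A ≡ 0`, so the rows of `A` satisfy a nontrivial relation `v`; then `(J - I) v = A G Aᵀ v = 0`
forces `v` to be constant, i.e. `E₁ + ⋯ + E₁₀ ∈ 3Λ`, and pairing with `L` gives the claim. -/

namespace Matrix

variable {n R : Type*} [Fintype n] [DecidableEq n] [CommRing R]

theorem of_const_one_sub_one_mulVec (v : n → R) :
    (of (fun _ _ => 1) - 1 : Matrix n n R) *ᵥ v = (fun _ => ∑ j, v j) - v := by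
  rw [sub_mulVec, one_mulVec]
  ext i
  simp [mulVec, dotProduct]

variable [IsDomain R]

theorem one_vecMul_eq_zero_of_mul_mul_transpose_eq {A G : Matrix n n R} (hG : G.det ≠ 0)
    (hA : A * G * Aᵀ = of (fun _ _ => 1) - 1) (hn : (Fintype.card n : R) = 1) :
    (fun _ => 1) ᵥ* A = 0 := by
  have hne : Nonempty n := Fintype.card_pos_iff.mp <| Nat.pos_of_ne_zero fun h => by
    simp [h] at hn
  have hdetJ : (A * G * Aᵀ).det = 0 := by
    refine exists_mulVec_eq_zero_iff.mp ⟨fun _ => 1, fun h => one_ne_zero (congrFun h hne.some), ?_⟩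
    ext i
    simp [hA, of_const_one_sub_one_mulVec, hn]
  have hdetA : Aᵀ.det = 0 := by
    simpa [det_mul, hG] using hdetJ
  obtain ⟨v, hv0, hv⟩ := exists_mulVec_eq_zero_iff.mpr hdetA
  have hv_const : ∀ i, v i = ∑ j, v j := by
    have hJv := congrArg (fun w => (A * G) *ᵥ w) hv
    simp only [mulVec_mulVec, hA, of_const_one_sub_one_mulVec, mulVec_zero, sub_eq_zero] at hJv
    exact fun i => (congrFun hJv i).symm
  obtain ⟨i₀, hi₀⟩ : ∃ i, v i ≠ 0 := Function.ne_iff.mp hv0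
  have hv_smul : v = (∑ j, v j) • fun _ => 1 := by
    ext i
    simp [← hv_const i]
  rw [mulVec_transpose, hv_smul, smul_vecMul] at hv
  exact (smul_eq_zero.mp hv).resolve_left (hv_const i₀ ▸ hi₀)

end Matrix

open Matrix

theorem epair_eq_dotProduct_mulVec (x y : Fin 10 → ℤ) :
    epair x y = x ⬝ᵥ (enriquesGram *ᵥ y) := by
  simp [epair, dotProduct, mulVec, Finset.mul_sum, mul_assoc]

theorem epair_sum_left {ι : Type*} (s : Finset ι) (x : ι → Fin 10 → ℤ) (y : Fin 10 → ℤ) :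
    epair (∑ i ∈ s, x i) y = ∑ i ∈ s, epair (x i) y := by
  simp only [epair_eq_dotProduct_mulVec, sum_dotProduct]

theorem dvd_epair_of_forall_dvd {d : ℤ} {x : Fin 10 → ℤ} (hx : ∀ k, d ∣ x k)
    (y : Fin 10 → ℤ) : d ∣ epair x y := by
  rw [epair_eq_dotProduct_mulVec]
  exact Finset.dvd_sum fun k _ => (hx k).mul_right _

theorem of_mul_enriquesGram_mul_transpose (E : Fin 10 → Fin 10 → ℤ) :
    of E * enriquesGram * (of E)ᵀ = of fun i j => epair (E i) (E j) := by
  ext i j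
  rw [mul_mul_apply, transpose_transpose, of_apply, epair_eq_dotProduct_mulVec]
  rfl

def enriquesGramInv : Matrix (Fin 10) (Fin 10) ℤ :=
  !![0, 1, 0, 0, 0, 0, 0, 0, 0, 0;
     1, 0, 0, 0, 0, 0, 0, 0, 0, 0;
     0, 0, -4, -5, -7, -10, -8, -6, -4, -2;
     0, 0, -5, -8, -10, -15, -12, -9, -6, -3;
     0, 0, -7, -10, -14, -20, -16, -12, -8, -4;
     0, 0, -10, -15, -20, -30, -24, -18, -12, -6;
     0, 0, -8, -12, -16, -24, -20, -15, -10, -5;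
     0, 0, -6, -9, -12, -18, -15, -12, -8, -4;
     0, 0, -4, -6, -8, -12, -10, -8, -6, -3;
     0, 0, -2, -3, -4, -6, -5, -4, -3, -2]

set_option maxRecDepth 100000 in
theorem enriquesGram_mul_enriquesGramInv : enriquesGram * enriquesGramInv = 1 := by decide

theorem isUnit_det_enriquesGram : IsUnit enriquesGram.det :=
  isUnit_det_of_right_inverse enriquesGram_mul_enriquesGramInv

theorem IsIsotropicTenSeq.gram_eq {E : Fin 10 → Fin 10 → ℤ} (hE : IsIsotropicTenSeq E) :
    of E * enriquesGram * (of E)ᵀ = of (fun _ _ => 1) - 1 := by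
  rw [of_mul_enriquesGram_mul_transpose]
  ext i j
  by_cases h : i = j
  · subst h; simp [hE.1 i]
  · simp [hE.2 i j h, h]

theorem IsIsotropicTenSeq.three_dvd_sum_apply {E : Fin 10 → Fin 10 → ℤ}
    (hE : IsIsotropicTenSeq E) (k : Fin 10) : (3 : ℤ) ∣ (∑ i, E i) k := by
  let f := Int.castRingHom (ZMod 3)
  have hG : (enriquesGram.map f).det ≠ 0 := by
    rw [← RingHom.mapMatrix_apply, ← RingHom.map_det]
    exact (isUnit_det_enriquesGram.map f).ne_zero
  have hA : (of E).map f * enriquesGram.map f * ((of E).map f)ᵀ = of (fun _ _ => 1) - 1 := by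
    rw [← transpose_map, ← Matrix.map_mul, ← Matrix.map_mul, hE.gram_eq]
    ext i j
    simp [Matrix.sub_apply, one_apply]
  have hcol := congrFun (one_vecMul_eq_zero_of_mul_mul_transpose_eq hG hA (by decide)) k
  refine (ZMod.intCast_zmod_eq_zero_iff_dvd _ 3).mp ?_
  simpa [vecMul, dotProduct, f] using hcol

/-- For any isotropic 10-sequence `E₁,…,E₁₀` in the Enriques lattice and any `L`, the
integer `⟨E₁,L⟩ + ⋯ + ⟨E₁₀,L⟩` is divisible by 3. -/
theorem isotropicTenSeq_sum_pairing_three_dvd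
    (E : Fin 10 → Fin 10 → ℤ) (hE : IsIsotropicTenSeq E) (L : Fin 10 → ℤ) :
    (3 : ℤ) ∣ ∑ i, epair (E i) L := by
  rw [← epair_sum_left]
  exact dvd_epair_of_forall_dvd hE.three_dvd_sum_apply L
end

section
/- In the fundamental-presentation setting with arbitrary integer coefficients a₀,a₁,…,a₇,a₉,a₁₀: if all of φ₁,…,φ₁₀ are even, where φᵢ := ⟨Eᵢ,L⟩, then all of the coefficients a₀,a₁,…,a₇,a₉,a₁₀ are even. (This is the parity argument proving the nontrivial direction of Theorem 1.4(f): all entries of the φ-vector are even if and only if L is numerically 2-divisible.) -/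
/-!
Write `L = ∑ⱼ cⱼ Eⱼ + a₀ D` with `c = (a₁, …, a₇, 0, a₉ - a₀, a₁₀ - a₀)`. Since `⟨Eᵢ, D⟩ = 3`,
`φᵢ = ∑ⱼ cⱼ - cᵢ + 3a₀`. Evenness of all `φᵢ` makes all `cᵢ` congruent mod 2, hence all even
because `c₈ = 0`; then `φᵢ ≡ a₀` forces `a₀` even, and with it `a₉` and `a₁₀`.
-/

section Isotropic

variable {M ι : Type*} [AddCommGroup M] [Fintype ι]
  {B : M →ₗ[ℤ] M →ₗ[ℤ] ℤ} {E : ι → M}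

theorem isotropic_apply_sum_smul (hE0 : ∀ i, B (E i) (E i) = 0)
    (hE1 : ∀ i j, i ≠ j → B (E i) (E j) = 1) (c : ι → ℤ) (i : ι) :
    B (E i) (∑ j, c j • E j) = (∑ j, c j) - c i := by
  classical
  have hterm : ∀ j, c j * B (E i) (E j) = c j - if i = j then c j else 0 := by
    intro j
    by_cases hij : i = j
    · subst hij; simp [hE0]
    · simp [hE1 i j hij, hij]
  simp only [map_sum, map_smul, smul_eq_mul, hterm, Finset.sum_sub_distrib, Finset.sum_ite_eq,
    Finset.mem_univ, if_true]

theorem isotropic_apply_eq_three (hE0 : ∀ i, B (E i) (E i) = 0)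
    (hE1 : ∀ i j, i ≠ j → B (E i) (E j) = 1) (hcard : Fintype.card ι = 10)
    {D : M} (hD : (3 : ℤ) • D = ∑ i, E i) (i : ι) : B (E i) D = 3 := by
  have h := isotropic_apply_sum_smul hE0 hE1 1 i
  simp only [Pi.one_apply, one_smul, ← hD, map_smul, smul_eq_mul, Finset.sum_const,
    Finset.card_univ, hcard, nsmul_eq_mul, mul_one] at h
  omega

end Isotropic

theorem even_of_even_sum_sub_add_three_mul {ι : Type*} [Fintype ι] (c : ι → ℤ) (a : ℤ) {k : ι}
    (hk : 2 ∣ c k) (h : ∀ i, 2 ∣ (∑ j, c j) - c i + 3 * a) : (∀ i, 2 ∣ c i) ∧ 2 ∣ a := by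
  have hc : ∀ i, 2 ∣ c i := fun i => by
    have := dvd_sub (h k) (h i)
    omega
  have hsum : 2 ∣ ∑ j, c j := Finset.dvd_sum fun j _ => hc j
  exact ⟨hc, by have := h k; omega⟩

theorem coefficients_even_of_phi_vector_even_general {M : Type*} [AddCommGroup M]
    (B : M →ₗ[ℤ] M →ₗ[ℤ] ℤ)
    (E : Fin 10 → M)
    (hE0 : ∀ i, B (E i) (E i) = 0)
    (hE1 : ∀ i j, i ≠ j → B (E i) (E j) = 1)
    (D : M) (hD : (3 : ℤ) • D = ∑ i, E i)
    (a0 a1 a2 a3 a4 a5 a6 a7 a9 a10 : ℤ)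
    (L : M)
    (hL : L = a1 • E 0 + a2 • E 1 + a3 • E 2 + a4 • E 3 + a5 • E 4 +
              a6 • E 5 + a7 • E 6 + a9 • E 8 + a10 • E 9 +
              a0 • (D - E 8 - E 9)) :
    ((∀ i, 2 ∣ B (E i) L) →
      2 ∣ a0 ∧ 2 ∣ a1 ∧ 2 ∣ a2 ∧ 2 ∣ a3 ∧ 2 ∣ a4 ∧ 2 ∣ a5 ∧ 2 ∣ a6 ∧
        2 ∣ a7 ∧ 2 ∣ a9 ∧ 2 ∣ a10) := by
  intro hφ
  set c : Fin 10 → ℤ := ![a1, a2, a3, a4, a5, a6, a7, 0, a9 - a0, a10 - a0] with hc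
  have hLc : L = ∑ j, c j • E j + a0 • D := by
    simp only [hL, hc, Fin.sum_univ_succ, Fin.sum_univ_zero, Matrix.cons_val_zero,
      Matrix.cons_val_succ, zero_smul, Fin.succ_zero_eq_one, Fin.succ_one_eq_two, Fin.reduceSucc]
    module
  have hφc : ∀ i, B (E i) L = (∑ j, c j) - c i + 3 * a0 := fun i => by
    rw [hLc, map_add, isotropic_apply_sum_smul hE0 hE1, map_smul,
      isotropic_apply_eq_three hE0 hE1 (Fintype.card_fin 10) hD, smul_eq_mul, mul_comm]
  obtain ⟨hceven, ha0⟩ := even_of_even_sum_sub_add_three_mul c a0 (k := 7) (by simp [hc])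
    fun i => hφc i ▸ hφ i
  exact ⟨ha0, hceven 0, hceven 1, hceven 2, hceven 3, hceven 4, hceven 5, hceven 6,
    by simpa [hc] using (hceven 8).add ha0, by simpa [hc] using (hceven 9).add ha0⟩

theorem coefficients_even_of_phi_vector_even {M : Type*} [AddCommGroup M]
    (B : M →ₗ[ℤ] M →ₗ[ℤ] ℤ) (hsymm : ∀ x y : M, B x y = B y x)
    (E : Fin 10 → M)
    (hE0 : ∀ i, B (E i) (E i) = 0)
    (hE1 : ∀ i j, i ≠ j → B (E i) (E j) = 1)
    (D : M) (hD : (3 : ℤ) • D = ∑ i, E i)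
    (a0 a1 a2 a3 a4 a5 a6 a7 a9 a10 : ℤ)
    (L : M)
    (hL : L = a1 • E 0 + a2 • E 1 + a3 • E 2 + a4 • E 3 + a5 • E 4 +
              a6 • E 5 + a7 • E 6 + a9 • E 8 + a10 • E 9 +
              a0 • (D - E 8 - E 9)) :
    ((∀ i, 2 ∣ B (E i) L) →
      2 ∣ a0 ∧ 2 ∣ a1 ∧ 2 ∣ a2 ∧ 2 ∣ a3 ∧ 2 ∣ a4 ∧ 2 ∣ a5 ∧ 2 ∣ a6 ∧
        2 ∣ a7 ∧ 2 ∣ a9 ∧ 2 ∣ a10) :=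
  coefficients_even_of_phi_vector_even_general B E hE0 hE1 D hD a0 a1 a2 a3 a4 a5 a6 a7 a9 a10 L hL
end
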